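/- The group A_5 × C_3 is an Oliver group: there do not exist subgroups P ⊴ H ⊴ A_5 × C_3 such that P is a p-group for some prime p, (A_5 × C_3)/H is a q-group for some prime q, and H/P is cyclic. -/

import Mathlib

/-! A group with a normal series `P ⊴ H ⊴ G` whose factors are a `p`-group, a cyclic group and a
`q`-group is solvable, since all three factors are. But `A₅ × C₃` is not solvable: it contains
`A₅`, which is simple and not abelian. -/

theorem alternatingGroup.not_isSolvable_fin_five :
    ¬ Group.IsSolvable (alternatingGroup (Fin 5)) := by
  rw [← IsSimpleGroup.comm_iff_isSolvable]
  intro h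
  have hcomm := h
    ⟨Equiv.swap 0 1 * Equiv.swap 2 3, Equiv.Perm.mem_alternatingGroup.mpr (by decide)⟩
    ⟨Equiv.swap 0 1 * Equiv.swap 1 2, Equiv.Perm.mem_alternatingGroup.mpr (by decide)⟩
  exact absurd (Subtype.ext_iff.mp hcomm) (by decide)

theorem IsPGroup.isSolvable {G : Type*} [Group G] [Finite G] {p : ℕ} [Fact p.Prime]
    (hG : IsPGroup p G) : Group.IsSolvable G :=
  haveI := hG.isNilpotent
  inferInstance

theorem IsCyclic.isSolvable {G : Type*} [Group G] [IsCyclic G] : Group.IsSolvable G :=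
  letI := IsCyclic.commGroup (α := G)
  inferInstance

theorem isSolvable_of_pGroup_by_cyclic_by_pGroup {G : Type*} [Group G] [Finite G] {p q : ℕ}
    [Fact p.Prime] [Fact q.Prime] (P H : Subgroup G) [(P.subgroupOf H).Normal] [H.Normal]
    (hP : IsPGroup p P) (hGH : IsPGroup q (G ⧸ H)) [IsCyclic (H ⧸ P.subgroupOf H)] :
    Group.IsSolvable G := by
  have : Group.IsSolvable (P.subgroupOf H) := (hP.comap_subtype (K := H)).isSolvable
  have : Group.IsSolvable (H ⧸ P.subgroupOf H) := IsCyclic.isSolvable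
  have : Group.IsSolvable H :=
    (Group.isSolvable_iff_subgroup_quotient (P.subgroupOf H)).mpr ⟨‹_›, ‹_›⟩
  exact (Group.isSolvable_iff_subgroup_quotient H).mpr ⟨‹_›, hGH.isSolvable⟩

/-- `A₅ × C₃` is an Oliver group: there is no chain `P ⊴ H ⊴ A₅ × C₃` with `P` a `p`-group,
`(A₅ × C₃)/H` a `q`-group (for primes `p`, `q`) and `H/P` cyclic. -/
theorem stmt_10 :
    ∀ (P H : Subgroup (alternatingGroup (Fin 5) × Multiplicative (ZMod 3)))
      [(P.subgroupOf H).Normal] [H.Normal],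
      P ≤ H →
      ¬ ((∃ p : ℕ, p.Prime ∧ IsPGroup p P) ∧
        (∃ q : ℕ, q.Prime ∧
          IsPGroup q ((alternatingGroup (Fin 5) × Multiplicative (ZMod 3)) ⧸ H)) ∧
        IsCyclic (H ⧸ P.subgroupOf H)) := by
  rintro P H _ _ - ⟨⟨p, hp, hP⟩, ⟨q, hq, hGH⟩, _⟩
  have : Fact p.Prime := ⟨hp⟩
  have : Fact q.Prime := ⟨hq⟩
  have := isSolvable_of_pGroup_by_cyclic_by_pGroup P H hP hGH
  exact alternatingGroup.not_isSolvable_fin_five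
    (Group.isSolvable_of_isSolvable_injective
      (f := MonoidHom.inl _ (Multiplicative (ZMod 3))) (Prod.mk_left_injective 1))
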